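/- There is a universal constant C ∈ (0,∞) such that for every p ∈ [1,∞), every n ∈ ℕ, every metric space (M,d_M), and every finitely supported f : ℍ → M (i.e., there exists m₀ ∈ M with f(x) = m₀ for all but finitely many x ∈ ℍ), ∑_{y ∈ ℍ} ∑_{z ∈ B_n} d_M(f(yz),f(y))^p ≤ C n^{p+4} ∑_{x ∈ ℍ} (d_M(f(xa),f(x))^p + d_M(f(xb),f(x))^p). -/

import Mathlib

/-- The discrete Heisenberg group, as ℤ³ with the Heisenberg multiplication
(equivalently, unit upper-triangular 3×3 integer matrices). -/
@[ext]
structure DH where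
  x : ℤ
  y : ℤ
  z : ℤ

namespace DH

instance : Mul DH := ⟨fun a b => ⟨a.x + b.x, a.y + b.y, a.z + b.z + a.x * b.y⟩⟩
instance : One DH := ⟨⟨0, 0, 0⟩⟩
instance : Inv DH := ⟨fun a => ⟨-a.x, -a.y, -a.z + a.x * a.y⟩⟩

lemma mul_def (a b : DH) : a * b = ⟨a.x + b.x, a.y + b.y, a.z + b.z + a.x * b.y⟩ := rfl
lemma one_def : (1 : DH) = ⟨0, 0, 0⟩ := rfl
lemma inv_def (a : DH) : a⁻¹ = ⟨-a.x, -a.y, -a.z + a.x * a.y⟩ := rfl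

instance : Group DH where
  mul_assoc a b c := by
    simp only [mul_def, mk.injEq]
    refine ⟨by ring, by ring, by ring⟩
  one_mul a := by simp [mul_def, one_def]
  mul_one a := by simp [mul_def, one_def]
  inv_mul_cancel a := by
    simp only [mul_def, inv_def, one_def, mk.injEq]
    refine ⟨by ring, by ring, by ring⟩

/-- The generator `a`. -/
def gA : DH := ⟨1, 0, 0⟩

/-- The generator `b`. -/
def gB : DH := ⟨0, 1, 0⟩

/-- The commutator `c = aba⁻¹b⁻¹`, a generator of the center. -/
def gC : DH := gA * gB * gA⁻¹ * gB⁻¹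

/-- Word length with respect to the symmetric generating set `{a, b, a⁻¹, b⁻¹}`. -/
noncomputable def wordLen (g : DH) : ℕ :=
  sInf {n | ∃ l : List DH, l.length = n ∧
    (∀ s ∈ l, s ∈ ({gA, gB, gA⁻¹, gB⁻¹} : Set DH)) ∧ l.prod = g}

/-- The left-invariant word metric on the discrete Heisenberg group. -/
noncomputable def dW (g h : DH) : ℕ := wordLen (g⁻¹ * h)

/-- The closed ball of radius `n` centered at the identity. -/
def Ball (n : ℕ) : Set DH := {g | dW g 1 ≤ n}

end DH

/-!
For a finitely supported `f`, the `ℓ^p` norm `N g` of `x ↦ d(f(xg), f(x))` is a group seminorm: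
subadditivity is the triangle inequality `d(f(xgh), f(x)) ≤ d(f(xgh), f(xg)) + d(f(xg), f(x))`
followed by Minkowski's inequality and right-invariance of counting measure. Every `z ∈ B_n` is a
word of length `≤ n` in `a^{±1}, b^{±1}`, so `N z ≤ n · max (N a) (N b)`, i.e.
`∑_y d(f(yz), f(y))^p ≤ n^p ∑_x (d(f(xa), f(x))^p + d(f(xb), f(x))^p)`. Summing over `z ∈ B_n`
costs the factor `|B_n| ≤ 27 n^4`, since `B_n` lies in the coordinate box `|x|, |y| ≤ n`,
`|z| ≤ n²`.
-/

open Finset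

theorem GroupSeminorm.apply_list_prod_le {G : Type*} [Group G] (N : GroupSeminorm G) {c : ℝ} :
    ∀ {l : List G}, (∀ s ∈ l, N s ≤ c) → N l.prod ≤ l.length * c
  | [], _ => by simp
  | s :: l, h => by
    have ih := apply_list_prod_le N fun t ht => h t (List.mem_cons_of_mem s ht)
    rw [List.prod_cons, List.length_cons, Nat.cast_succ]
    linarith [map_mul_le_add N s l.prod, h s List.mem_cons_self]

section Displacement

variable {G M : Type*} [Group G] [MetricSpace M] {f : G → M} {p : ℝ}

theorem summable_dist_mul_rpow (hf : ∃ m₀, {x | f x ≠ m₀}.Finite) (hp : p ≠ 0) (g : G) :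
    Summable fun x => dist (f (x * g)) (f x) ^ p := by
  obtain ⟨m₀, hfin⟩ := hf
  refine summable_of_hasFiniteSupport <|
    (hfin.union (hfin.preimage (mul_left_injective g).injOn)).subset fun x hx => ?_
  by_contra hx'
  simp only [Set.mem_union, Set.mem_ofPred_eq, Set.mem_preimage, not_or, not_not] at hx'
  simp [hx'.1, hx'.2, Real.zero_rpow hp] at hx

theorem tsum_dist_mul_mul_rpow (f : G → M) (p : ℝ) (g h : G) :
    ∑' x, dist (f (x * g * h)) (f (x * g)) ^ p = ∑' x, dist (f (x * h)) (f x) ^ p :=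
  (Equiv.mulRight g).tsum_eq fun x => dist (f (x * h)) (f x) ^ p

noncomputable def displacementSeminorm (hf : ∃ m₀, {x | f x ≠ m₀}.Finite) (hp : 1 ≤ p) :
    GroupSeminorm G where
  toFun g := (∑' x, dist (f (x * g)) (f x) ^ p) ^ p⁻¹
  map_one' := by
    have hp0 : p ≠ 0 := by linarith
    simp [Real.zero_rpow hp0, Real.zero_rpow (inv_ne_zero hp0)]
  mul_le' g h := by
    have hp0 : p ≠ 0 := by linarith
    have hsum_h : Summable fun x => dist (f (x * g * h)) (f (x * g)) ^ p :=
      (Equiv.mulRight g).summable_iff.2 (summable_dist_mul_rpow hf hp0 h)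
    have hsum_g := summable_dist_mul_rpow hf hp0 g
    have hsum_add := Real.summable_Lp_add_of_nonneg hp (fun _ => dist_nonneg)
      (fun _ => dist_nonneg) hsum_h hsum_g
    calc (∑' x, dist (f (x * (g * h))) (f x) ^ p) ^ p⁻¹
        ≤ (∑' x, (dist (f (x * g * h)) (f (x * g)) + dist (f (x * g)) (f x)) ^ p) ^ p⁻¹ := by
          refine Real.rpow_le_rpow (tsum_nonneg fun _ => by positivity)
            (Summable.tsum_le_tsum (fun x => ?_) (summable_dist_mul_rpow hf hp0 _) hsum_add)
            (by positivity)
          rw [← mul_assoc]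
          exact Real.rpow_le_rpow dist_nonneg (dist_triangle _ _ _) (by linarith)
      _ ≤ (∑' x, dist (f (x * g * h)) (f (x * g)) ^ p) ^ p⁻¹
            + (∑' x, dist (f (x * g)) (f x) ^ p) ^ p⁻¹ := by
          simpa only [one_div] using Real.Lp_add_le_tsum_of_nonneg' hp (fun _ => dist_nonneg)
            (fun _ => dist_nonneg) hsum_h hsum_g
      _ = (∑' x, dist (f (x * g)) (f x) ^ p) ^ p⁻¹
            + (∑' x, dist (f (x * h)) (f x) ^ p) ^ p⁻¹ := by
          rw [tsum_dist_mul_mul_rpow, add_comm]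
  inv' g := by
    rw [← (Equiv.mulRight g).tsum_eq]
    simp [dist_comm]

theorem displacementSeminorm_rpow (hf : ∃ m₀, {x | f x ≠ m₀}.Finite) (hp : 1 ≤ p) (g : G) :
    displacementSeminorm hf hp g ^ p = ∑' x, dist (f (x * g)) (f x) ^ p :=
  Real.rpow_inv_rpow (tsum_nonneg fun _ => by positivity) (by linarith)

end Displacement

namespace DH

def gens : Set DH := {gA, gB, gA⁻¹, gB⁻¹}

theorem mk_zero_zpow (a c m : ℤ) : (⟨a, 0, c⟩ : DH) ^ m = ⟨m * a, 0, m * c⟩ := by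
  induction m with
  | zero => simp [one_def]
  | succ k ih => rw [zpow_add_one, ih, mul_def]; ext <;> simp <;> ring
  | pred k ih => rw [zpow_sub_one, ih, inv_def, mul_def]; ext <;> simp <;> ring

theorem zero_mk_zpow (b c m : ℤ) : (⟨0, b, c⟩ : DH) ^ m = ⟨0, m * b, m * c⟩ := by
  induction m with
  | zero => simp [one_def]
  | succ k ih => rw [zpow_add_one, ih, mul_def]; ext <;> simp <;> ring
  | pred k ih => rw [zpow_sub_one, ih, inv_def, mul_def]; ext <;> simp <;> ring

theorem gC_eq : gC = ⟨0, 0, 1⟩ := by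
  ext <;> simp [gC, gA, gB, mul_def, inv_def]

theorem eq_gA_zpow_mul_gB_zpow_mul_gC_zpow (g : DH) :
    g = gA ^ g.x * gB ^ g.y * gC ^ (g.z - g.x * g.y) := by
  rw [gA, gB, gC_eq, mk_zero_zpow, zero_mk_zpow, mk_zero_zpow]
  ext <;> simp [mul_def]

theorem closure_gA_gB : Subgroup.closure {gA, gB} = ⊤ := by
  have hA : gA ∈ Subgroup.closure {gA, gB} := Subgroup.subset_closure (by simp)
  have hB : gB ∈ Subgroup.closure {gA, gB} := Subgroup.subset_closure (by simp)
  have hC : gC ∈ Subgroup.closure {gA, gB} := by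
    unfold gC
    exact mul_mem (mul_mem (mul_mem hA hB) (inv_mem hA)) (inv_mem hB)
  refine eq_top_iff.2 fun g _ => ?_
  rw [eq_gA_zpow_mul_gB_zpow_mul_gC_zpow g]
  exact mul_mem (mul_mem (zpow_mem hA _) (zpow_mem hB _)) (zpow_mem hC _)

theorem submonoidClosure_gens : Submonoid.closure gens = ⊤ := by
  have h := congrArg Subgroup.toSubmonoid closure_gA_gB
  rw [Subgroup.closure_toSubmonoid, Subgroup.top_toSubmonoid] at h
  convert h using 2
  ext s
  simp [gens]
  tauto

theorem exists_list_of_mem_ball {n : ℕ} {z : DH} (hz : z ∈ Ball n) :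
    ∃ l : List DH, l.length ≤ n ∧ (∀ s ∈ l, s ∈ gens) ∧ l.prod = z := by
  have hne : {k | ∃ l : List DH, l.length = k ∧ (∀ s ∈ l, s ∈ gens) ∧ l.prod = z⁻¹}.Nonempty := by
    obtain ⟨l, hl, hprod⟩ :=
      Submonoid.exists_list_of_mem_closure (submonoidClosure_gens ▸ Submonoid.mem_top z⁻¹)
    exact ⟨l.length, l, rfl, hl, hprod⟩
  obtain ⟨l, hlen, hl, hprod⟩ : wordLen z⁻¹ ∈ _ := Nat.sInf_mem hne
  refine ⟨(l.map (·⁻¹)).reverse, ?_, fun s hs => ?_, ?_⟩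
  · simpa [Ball, dW, hlen] using hz
  · obtain ⟨t, ht, rfl⟩ := List.mem_map.1 (List.mem_reverse.1 hs)
    rcases hl t ht with rfl | rfl | rfl | rfl <;> simp [gens]
  · rw [← List.prod_inv_reverse, hprod, inv_inv]

theorem apply_le_of_mem_ball (N : GroupSeminorm DH) {n : ℕ} {z : DH}
    (hz : z ∈ Ball n) : N z ≤ n * max (N gA) (N gB) := by
  obtain ⟨l, hlen, hl, rfl⟩ := exists_list_of_mem_ball hz
  have hletter : ∀ s ∈ l, N s ≤ max (N gA) (N gB) := fun s hs => by
    rcases hl s hs with rfl | rfl | rfl | rfl <;> simp [map_inv_eq_map]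
  calc N l.prod ≤ l.length * max (N gA) (N gB) := N.apply_list_prod_le hletter
    _ ≤ n * max (N gA) (N gB) := by gcongr

theorem abs_prod_le_of_forall_mem_gens : ∀ {l : List DH}, (∀ s ∈ l, s ∈ gens) →
    |l.prod.x| ≤ l.length ∧ |l.prod.y| ≤ l.length ∧ |l.prod.z| ≤ l.length ^ 2
  | [], _ => by simp [one_def]
  | s :: l, h => by
    obtain ⟨hx, hy, hz⟩ :=
      abs_prod_le_of_forall_mem_gens fun t ht => h t (List.mem_cons_of_mem s ht)
    obtain ⟨hsx, hsy, hsz⟩ : |s.x| ≤ 1 ∧ |s.y| ≤ 1 ∧ s.z = 0 := by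
      rcases h s List.mem_cons_self with rfl | rfl | rfl | rfl <;> simp [gA, gB, inv_def]
    simp only [List.prod_cons, mul_def, List.length_cons, Nat.cast_succ, hsz, zero_add]
    refine ⟨(abs_add_le _ _).trans (by linarith), (abs_add_le _ _).trans (by linarith), ?_⟩
    calc |l.prod.z + s.x * l.prod.y| ≤ |l.prod.z| + |s.x| * |l.prod.y| := by
          rw [← abs_mul]; exact abs_add_le _ _
      _ ≤ l.length ^ 2 + 1 * l.length := by gcongr
      _ ≤ (l.length + 1) ^ 2 := by nlinarith

def equivTriple : DH ≃ ℤ × ℤ × ℤ where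
  toFun g := (g.x, g.y, g.z)
  invFun t := ⟨t.1, t.2.1, t.2.2⟩

noncomputable def box (n : ℕ) : Finset DH :=
  (Icc (-n : ℤ) n ×ˢ Icc (-n : ℤ) n ×ˢ Icc (-(n : ℤ) ^ 2) (n ^ 2)).map
    equivTriple.symm.toEmbedding

theorem ball_subset_box (n : ℕ) : Ball n ⊆ box n := by
  intro z hz
  obtain ⟨l, hlen, hl, rfl⟩ := exists_list_of_mem_ball hz
  obtain ⟨hx, hy, hz⟩ := abs_prod_le_of_forall_mem_gens hl
  have hlen' : (l.length : ℤ) ≤ n := by exact_mod_cast hlen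
  have hz' : |l.prod.z| ≤ (n : ℤ) ^ 2 := hz.trans (by gcongr)
  rw [abs_le] at hx hy hz'
  rw [mem_coe, box, mem_map_equiv, Equiv.symm_symm]
  simp only [equivTriple, Equiv.coe_fn_mk, mem_product, mem_Icc]
  refine ⟨⟨?_, ?_⟩, ⟨?_, ?_⟩, ?_, ?_⟩ <;> linarith

theorem card_box (n : ℕ) : #(box n) = (2 * n + 1) ^ 2 * (2 * n ^ 2 + 1) := by
  have hsq : (n : ℤ) ^ 2 = ((n ^ 2 : ℕ) : ℤ) := by push_cast; rfl
  simp only [box, card_map, card_product, Int.card_Icc, hsq]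
  rw [show ((n : ℤ) + 1 - -n).toNat = 2 * n + 1 by omega,
    show ((n ^ 2 : ℕ) + 1 - -((n ^ 2 : ℕ) : ℤ)).toNat = 2 * n ^ 2 + 1 by omega]
  ring

theorem finite_ball (n : ℕ) : (Ball n).Finite :=
  (box n).finite_toSet.subset (ball_subset_box n)

theorem natCard_ball_mul_rpow_le {p : ℝ} (hp : 0 < p) (n : ℕ) :
    Nat.card (Ball n) * (n : ℝ) ^ p ≤ 27 * (n : ℝ) ^ (p + 4) := by
  rcases Nat.eq_zero_or_pos n with rfl | hn
  · simp [Real.zero_rpow hp.ne', Real.zero_rpow (by linarith : p + 4 ≠ 0)]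
  have hcard : Nat.card (Ball n) ≤ 27 * n ^ 4 := calc
    Nat.card (Ball n) = (Ball n).ncard := Nat.card_coe_set_eq _
    _ ≤ (box n : Set DH).ncard := Set.ncard_le_ncard (ball_subset_box n) (box n).finite_toSet
    _ = #(box n) := Set.ncard_coe_finset _
    _ = (2 * n + 1) ^ 2 * (2 * n ^ 2 + 1) := card_box n
    _ ≤ (3 * n) ^ 2 * (3 * n ^ 2) := by gcongr <;> nlinarith
    _ = 27 * n ^ 4 := by ring
  calc Nat.card (Ball n) * (n : ℝ) ^ p ≤ (27 * n ^ 4 : ℕ) * (n : ℝ) ^ p := by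
        gcongr
    _ = 27 * (n : ℝ) ^ (p + 4) := by
        rw [Real.rpow_add (by positivity), Real.rpow_ofNat]
        push_cast
        ring

theorem tsum_dist_mul_rpow_le_of_mem_ball {M : Type*} [MetricSpace M] {f : DH → M}
    (hf : ∃ m₀, {x | f x ≠ m₀}.Finite) {p : ℝ} (hp : 1 ≤ p) {n : ℕ} {z : DH} (hz : z ∈ Ball n) :
    ∑' y, dist (f (y * z)) (f y) ^ p ≤
      n ^ p * ∑' x, (dist (f (x * gA)) (f x) ^ p + dist (f (x * gB)) (f x) ^ p) := by
  set N := displacementSeminorm hf hp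
  have hp0 : p ≠ 0 := by linarith
  have hmax : max (N gA) (N gB) ^ p ≤ N gA ^ p + N gB ^ p := by
    rcases max_cases (N gA) (N gB) with ⟨h, -⟩ | ⟨h, -⟩ <;> rw [h]
    · linarith [Real.rpow_nonneg (apply_nonneg N gB) p]
    · linarith [Real.rpow_nonneg (apply_nonneg N gA) p]
  calc ∑' y, dist (f (y * z)) (f y) ^ p = N z ^ p := (displacementSeminorm_rpow hf hp z).symm
    _ ≤ (n * max (N gA) (N gB)) ^ p := by
        gcongr
        exact apply_le_of_mem_ball N hz
    _ ≤ n ^ p * (N gA ^ p + N gB ^ p) := by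
        rw [Real.mul_rpow (by positivity) (le_max_of_le_left (apply_nonneg N gA))]
        gcongr
    _ = _ := by
        rw [displacementSeminorm_rpow, displacementSeminorm_rpow,
          Summable.tsum_add (summable_dist_mul_rpow hf hp0 gA) (summable_dist_mul_rpow hf hp0 gB)]

end DH

open DH in
/-- Lemma 3.4: the global Poincaré-type inequality on the discrete Heisenberg group,
for finitely supported functions with values in a metric space. -/
theorem global_poincare_metric_space :
    ∃ C : ℝ, 0 < C ∧
      ∀ p : ℝ, 1 ≤ p → ∀ (n : ℕ) (M : Type) [MetricSpace M] (f : DH → M),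
        (∃ m₀ : M, {x : DH | f x ≠ m₀}.Finite) →
        ∑' y : DH, ∑' z : Ball n, dist (f (y * ↑z)) (f y) ^ p ≤
          C * (n : ℝ) ^ (p + 4) *
            ∑' x : DH, (dist (f (x * gA)) (f x) ^ p + dist (f (x * gB)) (f x) ^ p) := by
  refine ⟨27, by norm_num, fun p hp n M _ f hf => ?_⟩
  have hp0 : 0 < p := by linarith
  have : Fintype (Ball n) := (finite_ball n).fintype
  set E := ∑' x, (dist (f (x * gA)) (f x) ^ p + dist (f (x * gB)) (f x) ^ p)
  have hE : 0 ≤ E := tsum_nonneg fun _ => by positivity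
  calc ∑' y, ∑' z : Ball n, dist (f (y * z)) (f y) ^ p
      = ∑ z : Ball n, ∑' y, dist (f (y * z)) (f y) ^ p := by
        simp_rw [tsum_fintype]
        exact Summable.tsum_finsetSum fun z _ => summable_dist_mul_rpow hf hp0.ne' z
    _ ≤ ∑ _z : Ball n, n ^ p * E :=
        sum_le_sum fun z _ => tsum_dist_mul_rpow_le_of_mem_ball hf hp z.2
    _ = Nat.card (Ball n) * n ^ p * E := by
        rw [sum_const, card_univ, nsmul_eq_mul, Nat.card_eq_fintype_card, mul_assoc]
    _ ≤ 27 * n ^ (p + 4) * E := mul_le_mul_of_nonneg_right (natCard_ball_mul_rpow_le hp0 n) hE
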